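/- With notation as in the previous statement, for each m ∈ ℕ₀ define ρ^{m+}(z) := (1/V) Σ_{i > m} 1/(z^{-1}e^{βE_i} - 1). Then for any 0 < z₂ < z₁ < e^{βE₀}: ρ^{m+}(z₂)/z₂ ≤ (ρ^{m+}(z₁) - ρ^{m+}(z₂))/(z₁ - z₂) ≤ ρ^{m+}(z₁)/(z₁(1 - z₁ e^{-βE_m})). -/

import Mathlib

/-!
With `a = e^{βE_i}`, the `i`-th term of `ρ^{m+}` is `f_a(z) = z / (a - z)`, and both
inequalities hold term by term. The lower bound says that the slope `1 / (a - z)` of the chord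
of `f_a` from the origin increases with `z`. For the upper bound, the chord slope of `f_a` on
`[z₂, z₁]` is `a / ((a - z₁)(a - z₂))`, and `a (1 - z₁ e^{-βE_m}) ≤ a - z₂` because
`a ≥ e^{βE_m}` for every level above the `m`-th.
-/

open Real

section Termwise

variable {a b z₁ z₂ : ℝ}

lemma inv_inv_mul_sub_one {z : ℝ} (hz : z ≠ 0) (a : ℝ) : (z⁻¹ * a - 1)⁻¹ = z / (a - z) := by
  rw [show z⁻¹ * a - 1 = (a - z) / z by field_simp, inv_div]

lemma mul_div_sub_le_mul_div_sub (h2 : 0 ≤ z₂) (h21 : z₂ ≤ z₁) (h1 : z₁ < a) :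
    z₁ * (z₂ / (a - z₂)) ≤ z₂ * (z₁ / (a - z₁)) := by
  rw [mul_div_assoc', mul_div_assoc', mul_comm z₂]
  exact div_le_div_of_nonneg_left (by nlinarith) (by linarith) (by linarith)

lemma div_sub_le_mul_inv (hz : 0 ≤ z₁) (h1 : z₁ < b) (hb : b ≤ a) :
    z₁ / (a - z₁) ≤ z₁ * b / (b - z₁) * a⁻¹ := by
  have hb0 : 0 < b := hz.trans_lt h1
  calc z₁ / (a - z₁) ≤ z₁ * b / ((b - z₁) * a) := by
        rw [div_le_div_iff₀ (by linarith) (by nlinarith)]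
        nlinarith [mul_nonneg hz (sub_nonneg.2 hb), mul_nonneg hz hz]
    _ = z₁ * b / (b - z₁) * a⁻¹ := by rw [div_mul_eq_div_div, div_eq_mul_inv _ a]

lemma mul_sub_div_sub_le (h2 : 0 ≤ z₂) (h21 : z₂ ≤ z₁) (h1 : z₁ < b) (hb : b ≤ a) :
    z₁ * (1 - z₁ * b⁻¹) * (z₁ / (a - z₁) - z₂ / (a - z₂)) ≤ (z₁ - z₂) * (z₁ / (a - z₁)) := by
  have hb0 : 0 < b := h2.trans_lt (h21.trans_lt h1)
  have ha1 : 0 < a - z₁ := by linarith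
  have ha2 : 0 < a - z₂ := by linarith
  have hz₁ : z₁ ≤ z₁ * b⁻¹ * a := by
    rw [mul_assoc, inv_mul_eq_div]
    exact le_mul_of_one_le_right (by linarith) ((one_le_div hb0).2 hb)
  have hfactor : (1 - z₁ * b⁻¹) * a / (a - z₂) ≤ 1 := by
    rw [div_le_one ha2, sub_mul, one_mul]
    linarith
  calc z₁ * (1 - z₁ * b⁻¹) * (z₁ / (a - z₁) - z₂ / (a - z₂))
      = (z₁ - z₂) * (z₁ / (a - z₁)) * ((1 - z₁ * b⁻¹) * a / (a - z₂)) := by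
        field_simp
        ring
    _ ≤ (z₁ - z₂) * (z₁ / (a - z₁)) * 1 :=
        mul_le_mul_of_nonneg_left hfactor
          (mul_nonneg (by linarith) (div_nonneg (by linarith) ha1.le))
    _ = (z₁ - z₂) * (z₁ / (a - z₁)) := mul_one _

end Termwise

lemma mul_tsum_le_mul_tsum {ι : Type*} {f g : ι → ℝ} {c d : ℝ} (hf : Summable f)
    (hg : Summable g) (h : ∀ i, c * f i ≤ d * g i) : c * ∑' i, f i ≤ d * ∑' i, g i := by
  rw [← tsum_mul_left, ← tsum_mul_left]
  exact Summable.tsum_le_tsum h (hf.mul_left c) (hg.mul_left d)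

lemma div_le_sub_div_sub_of_mul_le {x₁ x₂ z₁ z₂ : ℝ} (h2 : 0 < z₂) (h21 : z₂ < z₁)
    (h : z₁ * x₂ ≤ z₂ * x₁) : x₂ / z₂ ≤ (x₁ - x₂) / (z₁ - z₂) := by
  rw [div_le_div_iff₀ h2 (sub_pos.2 h21)]
  linear_combination h

noncomputable def boseOccupationAbove (E : ℕ → ℝ) (β : ℝ) (m : ℕ) (z : ℝ) (i : ℕ) : ℝ :=
  if m < i then (z⁻¹ * exp (β * E i) - 1)⁻¹ else 0

section BoseOccupation

variable {E : ℕ → ℝ} {β z z₁ z₂ : ℝ} {m : ℕ}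

lemma exp_mul_le_exp_mul (hmono : Monotone E) (hβ : 0 ≤ β) {i j : ℕ} (hij : i ≤ j) :
    exp (β * E i) ≤ exp (β * E j) :=
  exp_le_exp.2 (mul_le_mul_of_nonneg_left (hmono hij) hβ)

lemma boseOccupationAbove_of_lt (hz : z ≠ 0) {i : ℕ} (hi : m < i) :
    boseOccupationAbove E β m z i = z / (exp (β * E i) - z) := by
  rw [boseOccupationAbove, if_pos hi, inv_inv_mul_sub_one hz]

lemma boseOccupationAbove_nonneg (hmono : Monotone E) (hβ : 0 ≤ β) (hz : 0 < z)
    (hz0 : z < exp (β * E 0)) (i : ℕ) : 0 ≤ boseOccupationAbove E β m z i := by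
  by_cases hi : m < i
  · have hza := hz0.trans_le (exp_mul_le_exp_mul hmono hβ (Nat.zero_le i))
    rw [boseOccupationAbove_of_lt hz.ne' hi]
    exact div_nonneg hz.le (by linarith)
  · rw [boseOccupationAbove, if_neg hi]

lemma summable_boseOccupationAbove (hmono : Monotone E) (hβ : 0 ≤ β)
    (hsum : Summable fun i => exp (-β * E i)) (hz : 0 < z) (hz0 : z < exp (β * E 0)) :
    Summable (boseOccupationAbove E β m z) := by
  set a₀ := exp (β * E 0)
  have hC : 0 ≤ z * a₀ / (a₀ - z) := div_nonneg (by positivity) (by linarith)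
  refine Summable.of_nonneg_of_le (boseOccupationAbove_nonneg hmono hβ hz hz0) (fun i => ?_)
    (hsum.mul_left (z * a₀ / (a₀ - z)))
  by_cases hi : m < i
  · rw [boseOccupationAbove_of_lt hz.ne' hi, neg_mul, exp_neg]
    exact div_sub_le_mul_inv hz.le hz0 (exp_mul_le_exp_mul hmono hβ (Nat.zero_le i))
  · rw [boseOccupationAbove, if_neg hi]
    exact mul_nonneg hC (exp_pos _).le

lemma mul_tsum_boseOccupationAbove_le (hmono : Monotone E) (hβ : 0 ≤ β)
    (hsum : Summable fun i => exp (-β * E i)) (h2 : 0 < z₂) (h21 : z₂ ≤ z₁)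
    (h1 : z₁ < exp (β * E 0)) :
    z₁ * ∑' i, boseOccupationAbove E β m z₂ i ≤ z₂ * ∑' i, boseOccupationAbove E β m z₁ i := by
  have hz₁ : 0 < z₁ := h2.trans_le h21
  refine mul_tsum_le_mul_tsum (summable_boseOccupationAbove hmono hβ hsum h2 (h21.trans_lt h1))
    (summable_boseOccupationAbove hmono hβ hsum hz₁ h1) fun i => ?_
  by_cases hi : m < i
  · rw [boseOccupationAbove_of_lt h2.ne' hi, boseOccupationAbove_of_lt hz₁.ne' hi]
    exact mul_div_sub_le_mul_div_sub h2.le h21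
      (h1.trans_le (exp_mul_le_exp_mul hmono hβ (Nat.zero_le i)))
  · simp only [boseOccupationAbove, if_neg hi, mul_zero, le_refl]

lemma mul_tsum_boseOccupationAbove_sub_le (hmono : Monotone E) (hβ : 0 ≤ β)
    (hsum : Summable fun i => exp (-β * E i)) (h2 : 0 < z₂) (h21 : z₂ ≤ z₁)
    (h1 : z₁ < exp (β * E 0)) :
    z₁ * (1 - z₁ * exp (-β * E m)) *
        (∑' i, boseOccupationAbove E β m z₁ i - ∑' i, boseOccupationAbove E β m z₂ i) ≤
      (z₁ - z₂) * ∑' i, boseOccupationAbove E β m z₁ i := by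
  have hz₁ : 0 < z₁ := h2.trans_le h21
  have hs₁ := summable_boseOccupationAbove (m := m) hmono hβ hsum hz₁ h1
  have hs₂ := summable_boseOccupationAbove (m := m) hmono hβ hsum h2 (h21.trans_lt h1)
  rw [← hs₁.tsum_sub hs₂]
  refine mul_tsum_le_mul_tsum (hs₁.sub hs₂) hs₁ fun i => ?_
  by_cases hi : m < i
  · rw [boseOccupationAbove_of_lt h2.ne' hi, boseOccupationAbove_of_lt hz₁.ne' hi, neg_mul,
      exp_neg]
    exact mul_sub_div_sub_le h2.le h21 (h1.trans_le (exp_mul_le_exp_mul hmono hβ (Nat.zero_le m)))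
      (exp_mul_le_exp_mul hmono hβ hi.le)
  · simp only [boseOccupationAbove, if_neg hi, sub_zero, mul_zero, le_refl]

end BoseOccupation

theorem stmt9_general (E : ℕ → ℝ) (hmono : Monotone E) (β V : ℝ) (hβ : 0 < β)
    (hV : 0 < V) (htrace : ∀ b : ℝ, 0 < b → Summable fun i => Real.exp (-b * E i))
    (m : ℕ)
    (z₁ z₂ : ℝ) (h2 : 0 < z₂) (h21 : z₂ < z₁) (h1 : z₁ < Real.exp (β * E 0))
    (ρm : ℝ → ℝ)
    (hρm : ∀ z : ℝ, ρm z =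
      (1 / V) * ∑' i : ℕ, if m < i then (z⁻¹ * Real.exp (β * E i) - 1)⁻¹ else 0) :
    ρm z₂ / z₂ ≤ (ρm z₁ - ρm z₂) / (z₁ - z₂) ∧
    (ρm z₁ - ρm z₂) / (z₁ - z₂) ≤ ρm z₁ / (z₁ * (1 - z₁ * Real.exp (-β * E m))) := by
  have hρ : ∀ z, ρm z = (1 / V) * ∑' i, boseOccupationAbove E β m z i := hρm
  have hV' : 0 ≤ 1 / V := by positivity
  have hsum := htrace β hβ
  have hD : 0 < z₁ * (1 - z₁ * exp (-β * E m)) := by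
    refine mul_pos (h2.trans h21) (sub_pos.2 ?_)
    rw [neg_mul, exp_neg, ← div_eq_mul_inv, div_lt_one (exp_pos _)]
    exact h1.trans_le (exp_mul_le_exp_mul hmono hβ.le (Nat.zero_le m))
  constructor
  · refine div_le_sub_div_sub_of_mul_le h2 h21 ?_
    rw [hρ, hρ, mul_left_comm, mul_left_comm z₂]
    exact mul_le_mul_of_nonneg_left
      (mul_tsum_boseOccupationAbove_le hmono hβ.le hsum h2 h21.le h1) hV'
  · rw [div_le_div_iff₀ (sub_pos.2 h21) hD, mul_comm, mul_comm (ρm z₁), hρ, hρ, ← mul_sub,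
      mul_left_comm, mul_left_comm (z₁ - z₂)]
    exact mul_le_mul_of_nonneg_left
      (mul_tsum_boseOccupationAbove_sub_le hmono hβ.le hsum h2 h21.le h1) hV'

/-- Convexity inequality for the occupation density above the `(m+1)`-th eigenvalue,
`ρ^{m+}(z) = (1/V) Σ_{i>m} 1/(z⁻¹e^{βE_i}-1)`: for `0 < z₂ < z₁ < e^{βE₀}`,
`ρ^{m+}(z₂)/z₂ ≤ (ρ^{m+}(z₁)-ρ^{m+}(z₂))/(z₁-z₂) ≤ ρ^{m+}(z₁)/(z₁(1-z₁e^{-βE_m}))`. -/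
theorem stmt9 (E : ℕ → ℝ) (h0 : 0 ≤ E 0) (hmono : Monotone E) (β V : ℝ) (hβ : 0 < β)
    (hV : 0 < V) (htrace : ∀ b : ℝ, 0 < b → Summable fun i => Real.exp (-b * E i))
    (m : ℕ)
    (z₁ z₂ : ℝ) (h2 : 0 < z₂) (h21 : z₂ < z₁) (h1 : z₁ < Real.exp (β * E 0))
    (ρm : ℝ → ℝ)
    (hρm : ∀ z : ℝ, ρm z =
      (1 / V) * ∑' i : ℕ, if m < i then (z⁻¹ * Real.exp (β * E i) - 1)⁻¹ else 0) :
    ρm z₂ / z₂ ≤ (ρm z₁ - ρm z₂) / (z₁ - z₂) ∧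
    (ρm z₁ - ρm z₂) / (z₁ - z₂) ≤ ρm z₁ / (z₁ * (1 - z₁ * Real.exp (-β * E m))) :=
  stmt9_general E hmono β V hβ hV htrace m z₁ z₂ h2 h21 h1 ρm hρm
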